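/- Let S(x) be the generating function of the shadow sequence s(n) = a(n) − b(n) of Motzkin path counts, satisfying S(x) = 1 + xS(x) − x²S(x)². Then the series x·S(−x) = Σ_{n≥1} (−1)^{n-1} s(n−1) x^n has compositional inverse equal to the Fibonacci generating function Σ_{n≥1} F(n) x^n. -/

import Mathlib

inductive MStep where
  | U : MStep
  | D : MStep
  | H : MStep
deriving DecidableEq

/-- A word in {U,D,H} is a Motzkin path if #U = #D and no prefix has more D's than U's. -/
def IsMotzkin (w : List MStep) : Prop :=
  w.count MStep.U = w.count MStep.D ∧
  ∀ p : List MStep, p <+: w → p.count MStep.D ≤ p.count MStep.U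

/-- Number of Motzkin paths of length n (the n-th Motzkin number). -/
noncomputable def motzkinNum (n : ℕ) : ℕ :=
  Nat.card {w : List MStep // w.length = n ∧ IsMotzkin w}

/-- Number of Motzkin paths of length n with an even number of U steps. -/
noncomputable def evenMotzkin (n : ℕ) : ℕ :=
  Nat.card {w : List MStep // w.length = n ∧ IsMotzkin w ∧ Even (w.count MStep.U)}

/-- Number of Motzkin paths of length n with an odd number of U steps. -/
noncomputable def oddMotzkin (n : ℕ) : ℕ :=
  Nat.card {w : List MStep // w.length = n ∧ IsMotzkin w ∧ Odd (w.count MStep.U)}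

/-- The shadow of the n-th Motzkin number: s(n) = a(n) - b(n). -/
noncomputable def shadow (n : ℕ) : ℤ :=
  (evenMotzkin n : ℤ) - (oddMotzkin n : ℤ)

/-- Composition f ∘ g of formal power series (intended for g with zero constant term). -/
noncomputable def PSComp (f g : PowerSeries ℤ) : PowerSeries ℤ :=
  PowerSeries.mk fun n =>
    PowerSeries.coeff (R := ℤ) n
      (∑ k ∈ Finset.range (n + 1), PowerSeries.C (R := ℤ) (PowerSeries.coeff (R := ℤ) k f) * g ^ k)

/-!
Cutting a Motzkin path at its first return to the axis writes it uniquely as `H w` or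
`U w₁ D w₂`; weighting paths by `(-1) ^ #U` turns this into `S = 1 + x S - x² S²`, so that
`G(x) = x S(-x)` satisfies `G = x - x G - x G²`. The Fibonacci series satisfies
`F = x + x F + x² F`, which is the same relation with the roles of `x` and the series exchanged.
Substituting `F` into the equation of `G` shows that `A = G ∘ F` and `A = x` both solve
`A = F - F A - F A²`; subtracting gives `(G ∘ F - x) (1 + F (1 + G ∘ F + x)) = 0` with a unit
second factor. Symmetrically `(F ∘ G - x) (1 - G - G²) = 0`.
-/

namespace Motzkin

open Finset hiding shadow

instance : Fintype MStep :=
  ⟨{.U, .D, .H}, fun x => by cases x <;> simp⟩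

def rise : MStep → ℤ
  | .U => 1
  | .D => -1
  | .H => 0

def height (w : List MStep) : ℤ := (w.map rise).sum

@[simp] lemma height_nil : height [] = 0 := rfl

@[simp] lemma height_cons (a : MStep) (w : List MStep) : height (a :: w) = rise a + height w :=
  List.sum_cons

@[simp] lemma height_append (v w : List MStep) : height (v ++ w) = height v + height w := by
  simp [height]

lemma height_eq_count_sub_count (w : List MStep) :
    height w = w.count .U - w.count .D := by
  induction w with
  | nil => simp
  | cons a w ih => cases a <;> simp [ih, rise] <;> ring

def StaysAbove (h : ℤ) (w : List MStep) : Prop := ∀ p, p <+: w → 0 ≤ h + height p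

lemma StaysAbove.nonneg {h : ℤ} {w : List MStep} (hw : StaysAbove h w) : 0 ≤ h := by
  simpa using hw [] w.nil_prefix

@[simp] lemma staysAbove_nil {h : ℤ} : StaysAbove h [] ↔ 0 ≤ h := by
  simp [StaysAbove]

lemma staysAbove_cons {h : ℤ} {a : MStep} {w : List MStep} :
    StaysAbove h (a :: w) ↔ 0 ≤ h ∧ StaysAbove (h + rise a) w := by
  simp only [StaysAbove, List.prefix_cons_iff]
  constructor
  · intro H
    exact ⟨by simpa using H [] (.inl rfl), fun p hp => by
      simpa [add_assoc] using H (a :: p) (.inr ⟨p, rfl, hp⟩)⟩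
  · rintro ⟨h0, H⟩ p (rfl | ⟨p, rfl, hp⟩)
    · simpa using h0
    · simpa [add_assoc] using H p hp

lemma staysAbove_append {h : ℤ} {v w : List MStep} :
    StaysAbove h (v ++ w) ↔ StaysAbove h v ∧ StaysAbove (h + height v) w := by
  induction v generalizing h with
  | nil => simpa using fun hw => hw.nonneg
  | cons a v ih => simp [staysAbove_cons, ih, and_assoc, add_assoc]

lemma StaysAbove.mono {h h' : ℤ} {w : List MStep} (hw : StaysAbove h w) (hh : h ≤ h') :
    StaysAbove h' w := fun p hp => (hw p hp).trans (by linarith)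

lemma isMotzkin_iff_staysAbove {w : List MStep} : IsMotzkin w ↔ height w = 0 ∧ StaysAbove 0 w := by
  simp only [IsMotzkin, StaysAbove, height_eq_count_sub_count, zero_add]
  constructor
  · rintro ⟨h1, h2⟩
    exact ⟨by omega, fun p hp => by have := h2 p hp; omega⟩
  · rintro ⟨h1, h2⟩
    exact ⟨by omega, fun p hp => by have := h2 p hp; omega⟩

lemma isMotzkin_nil : IsMotzkin [] := isMotzkin_iff_staysAbove.2 ⟨rfl, by simp [StaysAbove]⟩

lemma isMotzkin_H_cons {w : List MStep} : IsMotzkin (.H :: w) ↔ IsMotzkin w := by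
  simp [isMotzkin_iff_staysAbove, staysAbove_cons, rise]

def arch (w₁ w₂ : List MStep) : List MStep := .U :: w₁ ++ .D :: w₂

lemma isMotzkin_arch_iff {w₁ w₂ : List MStep} (h₁ : IsMotzkin w₁) :
    IsMotzkin (arch w₁ w₂) ↔ IsMotzkin w₂ := by
  rw [isMotzkin_iff_staysAbove] at h₁
  simp [arch, isMotzkin_iff_staysAbove, staysAbove_cons, staysAbove_append, rise, h₁.1, h₁.2.mono]

lemma length_le_of_append_D_eq {a₁ a₂ b₁ b₂ : List MStep} (h₁ : IsMotzkin a₁)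
    (h₂ : IsMotzkin a₂) (h : a₁ ++ .D :: b₁ = a₂ ++ .D :: b₂) : a₂.length ≤ a₁.length := by
  by_contra! hlt
  have hp : a₁ ++ [.D] <+: a₂ :=
    List.prefix_of_prefix_length_le ⟨b₁, by simp [h]⟩ (List.prefix_append a₂ (.D :: b₂))
      (by simpa using hlt)
  have := (isMotzkin_iff_staysAbove.1 h₂).2 _ hp
  simp [(isMotzkin_iff_staysAbove.1 h₁).1, rise] at this

lemma append_D_inj {a₁ a₂ b₁ b₂ : List MStep} (h₁ : IsMotzkin a₁) (h₂ : IsMotzkin a₂)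
    (h : a₁ ++ .D :: b₁ = a₂ ++ .D :: b₂) : a₁ = a₂ ∧ b₁ = b₂ := by
  obtain ⟨rfl, hb⟩ := List.append_inj h <| le_antisymm
    (length_le_of_append_D_eq h₂ h₁ h.symm) (length_le_of_append_D_eq h₁ h₂ h)
  exact ⟨rfl, List.cons_injective hb⟩

lemma exists_eq_append_D_of_height_neg {r : List MStep} (hr : height r < 0) :
    ∃ w₁ w₂, r = w₁ ++ .D :: w₂ ∧ IsMotzkin w₁ := by
  induction hn : r.length using Nat.strong_induction_on generalizing r with
  | _ n ih =>
  match r, hr with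
  | .D :: r', _ => exact ⟨[], r', rfl, isMotzkin_nil⟩
  | .H :: r', hr =>
    obtain ⟨w₁, w₂, rfl, hw⟩ := ih r'.length (by simp [← hn]) (by simpa [rise] using hr) rfl
    exact ⟨.H :: w₁, w₂, rfl, isMotzkin_H_cons.2 hw⟩
  | .U :: r', hr =>
    obtain ⟨s₁, t₁, rfl, hs₁⟩ :=
      ih r'.length (by simp [← hn]) (by simp only [height_cons, rise] at hr; linarith) rfl
    obtain ⟨s₂, t₂, rfl, hs₂⟩ := ih t₁.length (by simp [← hn]; omega)
      (by simpa [rise, (isMotzkin_iff_staysAbove.1 hs₁).1] using hr) rfl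
    exact ⟨arch s₁ s₂, t₂, by simp [arch], (isMotzkin_arch_iff hs₁).2 hs₂⟩

lemma arch_inj {w₁ w₂ v₁ v₂ : List MStep} (hw₁ : IsMotzkin w₁) (hv₁ : IsMotzkin v₁) :
    arch w₁ w₂ = arch v₁ v₂ ↔ w₁ = v₁ ∧ w₂ = v₂ :=
  ⟨fun h => append_D_inj hw₁ hv₁ (List.cons_injective h), by rintro ⟨rfl, rfl⟩; rfl⟩

lemma isMotzkin_iff_nil_or_H_cons_or_arch {w : List MStep} :
    IsMotzkin w ↔ w = [] ∨ (∃ t, w = .H :: t ∧ IsMotzkin t) ∨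
      ∃ w₁ w₂, w = arch w₁ w₂ ∧ IsMotzkin w₁ ∧ IsMotzkin w₂ := by
  refine ⟨fun hw => ?_, ?_⟩
  · match w, hw with
    | [], _ => exact .inl rfl
    | .H :: t, hw => exact .inr (.inl ⟨t, rfl, isMotzkin_H_cons.1 hw⟩)
    | .D :: t, hw =>
      have := (staysAbove_cons.1 (isMotzkin_iff_staysAbove.1 hw).2).2.nonneg
      simp [rise] at this
    | .U :: t, hw =>
      have ht : height t < 0 := by
        have := (isMotzkin_iff_staysAbove.1 hw).1
        simp only [height_cons, rise] at this
        linarith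
      obtain ⟨w₁, w₂, rfl, hw₁⟩ := exists_eq_append_D_of_height_neg ht
      exact .inr (.inr ⟨w₁, w₂, rfl, hw₁, (isMotzkin_arch_iff hw₁).1 hw⟩)
  · rintro (rfl | ⟨t, rfl, ht⟩ | ⟨w₁, w₂, rfl, hw₁, hw₂⟩)
    · exact isMotzkin_nil
    · exact isMotzkin_H_cons.2 ht
    · exact (isMotzkin_arch_iff hw₁).2 hw₂

lemma finite_setOf_isMotzkin (n : ℕ) : {w : List MStep | w.length = n ∧ IsMotzkin w}.Finite :=
  (List.finite_length_eq MStep n).subset fun _ hw => hw.1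

noncomputable def paths (n : ℕ) : Finset (List MStep) := (finite_setOf_isMotzkin n).toFinset

@[simp] lemma mem_paths {n : ℕ} {w : List MStep} : w ∈ paths n ↔ w.length = n ∧ IsMotzkin w :=
  Set.Finite.mem_toFinset _

lemma card_paths_filter (n : ℕ) (P : List MStep → Prop) [DecidablePred P] :
    Nat.card {w : List MStep // w.length = n ∧ IsMotzkin w ∧ P w} = #{w ∈ paths n | P w} := by
  rw [← Nat.card_eq_finsetCard]
  exact Nat.card_congr (Equiv.subtypeEquivRight fun w => by simp [and_assoc])

def sign (w : List MStep) : ℤ := (-1) ^ w.count .U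

@[simp] lemma sign_H_cons (w : List MStep) : sign (.H :: w) = sign w := by
  simp [sign]

@[simp] lemma sign_arch (w₁ w₂ : List MStep) : sign (arch w₁ w₂) = -(sign w₁ * sign w₂) := by
  simp [sign, arch, pow_succ, pow_add]

lemma shadow_eq_sum_sign (n : ℕ) : shadow n = ∑ w ∈ paths n, sign w := by
  have hsign (k : ℕ) : (-1 : ℤ) ^ k = (if Even k then 1 else 0) - (if Odd k then 1 else 0) := by
    rcases Nat.even_or_odd k with hk | hk
    · simp [hk, hk.neg_one_pow, Nat.not_odd_iff_even.2 hk]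
    · simp [hk, hk.neg_one_pow, Nat.not_even_iff_odd.2 hk]
  simp only [shadow, evenMotzkin, oddMotzkin, card_paths_filter, sign, hsign, sum_sub_distrib,
    sum_boole]

lemma paths_zero : paths 0 = {[]} := by
  ext w
  simp only [mem_paths, List.length_eq_zero_iff, mem_singleton]
  exact ⟨And.left, fun hw => ⟨hw, hw ▸ isMotzkin_nil⟩⟩

lemma paths_one : paths 1 = {[.H]} := by
  ext w
  simp only [mem_paths, mem_singleton, isMotzkin_iff_nil_or_H_cons_or_arch (w := w)]
  constructor
  · rintro ⟨hl, rfl | ⟨t, rfl, ht⟩ | ⟨w₁, w₂, rfl, -, -⟩⟩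
    · simp at hl
    · simp_all [List.length_eq_zero_iff]
    · simp [arch] at hl
  · rintro rfl
    exact ⟨rfl, .inr (.inl ⟨[], rfl, isMotzkin_nil⟩)⟩

lemma shadow_zero : shadow 0 = 1 := by
  simp [shadow_eq_sum_sign, paths_zero, sign]

lemma shadow_one : shadow 1 = 1 := by
  simp [shadow_eq_sum_sign, paths_one, sign]

noncomputable def pieces (n : ℕ) : Finset (List MStep ⊕ Σ _ : ℕ × ℕ, List MStep × List MStep) :=
  (paths (n + 1)).disjSum ((antidiagonal n).sigma fun ij => paths ij.1 ×ˢ paths ij.2)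

def assemble : (List MStep ⊕ Σ _ : ℕ × ℕ, List MStep × List MStep) → List MStep :=
  Sum.elim (.H :: ·) fun y => arch y.2.1 y.2.2

lemma inl_mem_pieces {n : ℕ} {w : List MStep} :
    .inl w ∈ pieces n ↔ w.length = n + 1 ∧ IsMotzkin w := by
  simp [pieces]

lemma inr_mem_pieces {n i j : ℕ} {w₁ w₂ : List MStep} :
    .inr ⟨(i, j), (w₁, w₂)⟩ ∈ pieces n ↔
      i + j = n ∧ (w₁.length = i ∧ IsMotzkin w₁) ∧ w₂.length = j ∧ IsMotzkin w₂ := by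
  simp [pieces]

lemma bijOn_assemble (n : ℕ) : Set.BijOn assemble (pieces n) (paths (n + 2)) := by
  refine ⟨?_, ?_, ?_⟩
  · rintro (w | ⟨⟨i, j⟩, w₁, w₂⟩) hw
    · obtain ⟨hl, hw⟩ := inl_mem_pieces.1 hw
      exact mem_paths.2 ⟨by simp [assemble, hl], isMotzkin_H_cons.2 hw⟩
    · obtain ⟨rfl, ⟨rfl, hw₁⟩, rfl, hw₂⟩ := inr_mem_pieces.1 hw
      exact mem_paths.2 ⟨by simp [assemble, arch]; omega, (isMotzkin_arch_iff hw₁).2 hw₂⟩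
  · rintro (w | ⟨⟨i, j⟩, w₁, w₂⟩) hw (v | ⟨⟨i', j'⟩, v₁, v₂⟩) hv h
    · simpa [assemble] using h
    · simp [assemble, arch] at h
    · simp [assemble, arch] at h
    · obtain ⟨-, ⟨rfl, hw₁⟩, rfl, -⟩ := inr_mem_pieces.1 hw
      obtain ⟨-, ⟨rfl, hv₁⟩, rfl, -⟩ := inr_mem_pieces.1 hv
      obtain ⟨rfl, rfl⟩ := (arch_inj hw₁ hv₁).1 h
      rfl
  · intro w hw
    obtain ⟨hl, hM⟩ := mem_paths.1 hw
    rcases isMotzkin_iff_nil_or_H_cons_or_arch.1 hM with rfl | ⟨t, rfl, ht⟩ | ⟨w₁, w₂, rfl, h₁, h₂⟩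
    · simp at hl
    · exact ⟨.inl t, inl_mem_pieces.2 ⟨by simpa using hl, ht⟩, rfl⟩
    · refine ⟨.inr ⟨(w₁.length, w₂.length), (w₁, w₂)⟩, inr_mem_pieces.2 ?_, rfl⟩
      simp only [arch, List.cons_append, List.length_cons, List.length_append] at hl
      exact ⟨by omega, ⟨rfl, h₁⟩, rfl, h₂⟩

lemma shadow_add_two (n : ℕ) :
    shadow (n + 2) = shadow (n + 1) - ∑ ij ∈ antidiagonal n, shadow ij.1 * shadow ij.2 := by
  have hsum := sum_nbij (f := Sum.elim sign fun y => -(sign y.2.1 * sign y.2.2)) (g := sign) _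
    (bijOn_assemble n).mapsTo (bijOn_assemble n).injOn (bijOn_assemble n).surjOn
    (by rintro (w | y) - <;> simp [assemble])
  simp only [shadow_eq_sum_sign, ← hsum, pieces, sum_disjSum, Sum.elim_inl, Sum.elim_inr, sum_sigma,
    sum_product, sum_neg_distrib, sum_mul_sum, sub_eq_add_neg]

end Motzkin

open PowerSeries

lemma PSComp_eq_subst {f g : ℤ⟦X⟧} (hg : constantCoeff g = 0) : PSComp f g = f.subst g := by
  ext n
  rw [PSComp, coeff_mk, map_sum, coeff_subst' (HasSubst.of_constantCoeff_zero' hg),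
    finsum_eq_sum_of_support_subset _ (s := Finset.range (n + 1))]
  · simp only [coeff_C_mul, smul_eq_mul]
  · intro d hd
    by_contra hdn
    have hX : X ^ d ∣ g ^ d := pow_dvd_pow_of_dvd (X_dvd_iff.2 hg) d
    simp only [Function.mem_support, smul_eq_mul] at hd
    exact hd (by rw [X_pow_dvd_iff.1 hX n (by simpa using hdn), mul_zero])

section

variable {R : Type*} [CommRing R]

lemma subst_eq_X_of_eq_X_add {F G : R⟦X⟧} (hF : F = X + X * F + X ^ 2 * F)
    (hG : G = X - X * G - X * G ^ 2) : G.subst F = X := by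
  have hF0 : constantCoeff F = 0 := by rw [hF]; simp
  have hsubst := congrArg (substAlgHom (HasSubst.of_constantCoeff_zero' hF0)) hG
  simp only [map_sub, map_mul, map_pow, substAlgHom_X, coe_substAlgHom] at hsubst
  set A := G.subst F
  have hu : IsUnit (1 + F * (1 + A + X)) := isUnit_iff_constantCoeff.2 (by simp [hF0])
  refine sub_eq_zero.1 (hu.mul_left_eq_zero.1 ?_)
  linear_combination hsubst + hF

lemma subst_eq_X_of_eq_X_sub {F G : R⟦X⟧} (hF : F = X + X * F + X ^ 2 * F)
    (hG : G = X - X * G - X * G ^ 2) : F.subst G = X := by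
  have hG0 : constantCoeff G = 0 := by rw [hG]; simp
  have hsubst := congrArg (substAlgHom (HasSubst.of_constantCoeff_zero' hG0)) hF
  simp only [map_add, map_mul, map_pow, substAlgHom_X, coe_substAlgHom] at hsubst
  set B := F.subst G
  have hu : IsUnit (1 - G - G ^ 2) := isUnit_iff_constantCoeff.2 (by simp [hG0])
  refine sub_eq_zero.1 (hu.mul_left_eq_zero.1 ?_)
  linear_combination hsubst + hG

lemma mk_fib_eq :
    (mk fun n => (Nat.fib n : R)) =
      X + X * (mk fun n => (Nat.fib n : R)) + X ^ 2 * mk fun n => (Nat.fib n : R) := by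
  ext (_ | _ | n)
  · simp
  · simp [coeff_X_pow_mul']
  · simp [coeff_X_pow_mul', Nat.fib_add_two, coeff_X]
    ring

lemma X_mul_rescale_neg_one_eq {S : R⟦X⟧} (hS : S = 1 + X * S - X ^ 2 * S ^ 2) :
    X * rescale (-1) S = X - X * (X * rescale (-1) S) - X * (X * rescale (-1) S) ^ 2 := by
  nth_rewrite 1 [hS]
  simp only [map_add, map_sub, map_mul, map_pow, map_one, rescale_X, map_neg]
  ring

end

lemma mk_shadow_eq : mk shadow = 1 + X * mk shadow - X ^ 2 * mk shadow ^ 2 := by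
  ext (_ | _ | n)
  · simp [Motzkin.shadow_zero]
  · simp [Motzkin.shadow_zero, Motzkin.shadow_one, coeff_X_pow_mul']
  · rw [coeff_mk, Motzkin.shadow_add_two, map_sub, map_add, coeff_succ_X_mul, coeff_X_pow_mul',
      pow_two, coeff_mul]
    simp

open PowerSeries in
theorem stmt_18 :
    ((PowerSeries.mk fun n => if n = 0 then 0 else (-1) ^ (n - 1) * shadow (n - 1)) =
      X * PowerSeries.rescale (-1) (PowerSeries.mk shadow)) ∧
    PSComp (PowerSeries.mk fun n => if n = 0 then 0 else (-1) ^ (n - 1) * shadow (n - 1))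
      (PowerSeries.mk fun n => (Nat.fib n : ℤ)) = X ∧
    PSComp (PowerSeries.mk fun n => (Nat.fib n : ℤ))
      (PowerSeries.mk fun n => if n = 0 then 0 else (-1) ^ (n - 1) * shadow (n - 1)) = X := by
  have hG : (PowerSeries.mk fun n => if n = 0 then 0 else (-1) ^ (n - 1) * shadow (n - 1)) =
      X * PowerSeries.rescale (-1) (PowerSeries.mk shadow) := by
    ext (_ | n) <;> simp [coeff_rescale]
  have hshadow := X_mul_rescale_neg_one_eq mk_shadow_eq
  rw [hG, PSComp_eq_subst, PSComp_eq_subst]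
  · exact ⟨rfl, subst_eq_X_of_eq_X_add mk_fib_eq hshadow, subst_eq_X_of_eq_X_sub mk_fib_eq hshadow⟩
  all_goals simp
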